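/- Let α > 0, r > 0 and let (z_j) be a sequence in ℂⁿ such that the balls D(z_j, r/2) cover ℂⁿ and the balls D(z_j, r/4) are pairwise disjoint. Then there are constants 0 < c ≤ C (depending on α, r, n) such that for all w ∈ ℂⁿ: c ≤ Σ_{j=1}^∞ e^{−α|z_j − w|²/2} ≤ C. -/

import Mathlib

/-!
Upper bound: by `‖x - w‖² ≤ 2 (r/4)² + 2 ‖z_j - w‖²`, each term `e^{-α|z_j - w|²/2}` is at most
a constant times the mean of the Gaussian `e^{-α|x - w|²/4}` over the ball `D(z_j, r/4)`; these
balls are disjoint, so the sum is bounded by a multiple of the total Gaussian integral.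
Lower bound: `w` lies in some `D(z_j, r/2)`, and that single term is at least `e^{-α r²/8}`.
-/

open MeasureTheory Metric

section Packing

variable {E ι : Type*} [NormedAddCommGroup E] [ProperSpace E] [MeasurableSpace E] [BorelSpace E]
  (μ : Measure E) [μ.IsAddHaarMeasure] {z : ι → E} {δ : ℝ} {f : ι → ℝ} {g : E → ℝ}

theorem measureReal_ball_mul_sum_le_integral
    (hdisj : Pairwise fun j k => Disjoint (ball (z j) δ) (ball (z k) δ))
    (hg : Integrable g μ) (hg0 : 0 ≤ g) (hfg : ∀ j, ∀ x ∈ ball (z j) δ, f j ≤ g x)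
    (s : Finset ι) :
    μ.real (ball 0 δ) * ∑ j ∈ s, f j ≤ ∫ x, g x ∂μ :=
  calc μ.real (ball 0 δ) * ∑ j ∈ s, f j = ∑ j ∈ s, ∫ _ in ball (z j) δ, f j ∂μ := by
        simp only [Finset.mul_sum, setIntegral_const, Measure.addHaar_real_ball_center, smul_eq_mul]
    _ ≤ ∑ j ∈ s, ∫ x in ball (z j) δ, g x ∂μ :=
        Finset.sum_le_sum fun j _ => setIntegral_mono_on
          (integrableOn_const measure_ball_lt_top.ne) hg.integrableOn measurableSet_ball (hfg j)
    _ = ∫ x in ⋃ j ∈ s, ball (z j) δ, g x ∂μ :=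
        (integral_biUnion_finset s (fun _ _ => measurableSet_ball) (hdisj.set_pairwise _)
          fun _ _ => hg.integrableOn).symm
    _ ≤ ∫ x, g x ∂μ := setIntegral_le_integral hg (.of_forall hg0)

theorem sum_le_integral_div_measureReal_ball (hδ : 0 < δ)
    (hdisj : Pairwise fun j k => Disjoint (ball (z j) δ) (ball (z k) δ))
    (hg : Integrable g μ) (hg0 : 0 ≤ g) (hfg : ∀ j, ∀ x ∈ ball (z j) δ, f j ≤ g x)
    (s : Finset ι) :
    ∑ j ∈ s, f j ≤ (∫ x, g x ∂μ) / μ.real (ball 0 δ) := by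
  have hball : 0 < μ.real (ball 0 δ) :=
    ENNReal.toReal_pos (measure_ball_pos μ 0 hδ).ne' measure_ball_lt_top.ne
  rw [le_div_iff₀ hball, mul_comm]
  exact measureReal_ball_mul_sum_le_integral μ hdisj hg hg0 hfg s

theorem summable_of_pairwise_disjoint_ball (hδ : 0 < δ)
    (hdisj : Pairwise fun j k => Disjoint (ball (z j) δ) (ball (z k) δ))
    (hg : Integrable g μ) (hg0 : 0 ≤ g) (hf0 : 0 ≤ f)
    (hfg : ∀ j, ∀ x ∈ ball (z j) δ, f j ≤ g x) :
    Summable f :=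
  summable_of_sum_le hf0 (sum_le_integral_div_measureReal_ball μ hδ hdisj hg hg0 hfg)

theorem tsum_le_integral_div_measureReal_ball (hδ : 0 < δ)
    (hdisj : Pairwise fun j k => Disjoint (ball (z j) δ) (ball (z k) δ))
    (hg : Integrable g μ) (hg0 : 0 ≤ g) (hf0 : 0 ≤ f)
    (hfg : ∀ j, ∀ x ∈ ball (z j) δ, f j ≤ g x) :
    ∑' j, f j ≤ (∫ x, g x ∂μ) / μ.real (ball 0 δ) :=
  (summable_of_pairwise_disjoint_ball μ hδ hdisj hg hg0 hf0 hfg).tsum_le_of_sum_le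
    (sum_le_integral_div_measureReal_ball μ hδ hdisj hg hg0 hfg)

end Packing

theorem integrable_exp_neg_mul_norm_sub_sq {V : Type*} [NormedAddCommGroup V]
    [InnerProductSpace ℝ V] [FiniteDimensional ℝ V] [MeasurableSpace V] [BorelSpace V]
    {b : ℝ} (hb : 0 < b) (w : V) :
    Integrable fun x : V => Real.exp (-b * ‖x - w‖ ^ 2) := by
  have h := GaussianFourier.integrable_cexp_neg_mul_sq_norm_add
    (V := V) (b := (b : ℂ)) (by simpa using hb) 0 0
  refine (h.norm.congr (.of_forall fun v => ?_)).comp_sub_right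
    (f := fun v => Real.exp (-b * ‖v‖ ^ 2)) w
  simp [Complex.norm_exp, ← Complex.ofReal_pow, ← Complex.ofReal_mul, ← Complex.ofReal_neg]

theorem exp_neg_mul_norm_sub_sq_le {E : Type*} [SeminormedAddCommGroup E] {α δ : ℝ}
    (hα : 0 ≤ α) {x y : E} (hxy : dist x y ≤ δ) (w : E) :
    Real.exp (-α * ‖y - w‖ ^ 2 / 2) ≤
      Real.exp (α * δ ^ 2 / 2) * Real.exp (-(α / 4) * ‖x - w‖ ^ 2) := by
  have htri : ‖x - w‖ ≤ δ + ‖y - w‖ :=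
    (norm_sub_le_norm_sub_add_norm_sub x y w).trans (by rw [← dist_eq_norm]; linarith)
  have hsq : ‖x - w‖ ^ 2 ≤ 2 * δ ^ 2 + 2 * ‖y - w‖ ^ 2 := by
    nlinarith [norm_nonneg (x - w), sq_nonneg (δ - ‖y - w‖)]
  rw [← Real.exp_add, Real.exp_le_exp]
  nlinarith [mul_le_mul_of_nonneg_left hsq hα]

/-- Two-sided uniform bound for the lattice Gaussian sum: if the balls `D(z_j, r/2)` cover `ℂⁿ`
and the balls `D(z_j, r/4)` are pairwise disjoint, then there are `0 < c ≤ C` with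
`c ≤ Σ_j e^{−α|z_j − w|²/2} ≤ C` for all `w`. -/
theorem lattice_gaussian_sum_bounds (n : ℕ) (α r : ℝ) (hα : 0 < α) (hr : 0 < r)
    (z : ℕ → EuclideanSpace ℂ (Fin n))
    (hcover : ∀ x : EuclideanSpace ℂ (Fin n), ∃ j, x ∈ ball (z j) (r / 2))
    (hdisj : Pairwise fun j k => Disjoint (ball (z j) (r / 4)) (ball (z k) (r / 4))) :
    ∃ c C : ℝ, 0 < c ∧ c ≤ C ∧
      ∀ w : EuclideanSpace ℂ (Fin n),
        c ≤ (∑' j : ℕ, Real.exp (-α * ‖z j - w‖ ^ 2 / 2)) ∧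
        (∑' j : ℕ, Real.exp (-α * ‖z j - w‖ ^ 2 / 2)) ≤ C := by
  let : InnerProductSpace ℝ (EuclideanSpace ℂ (Fin n)) := InnerProductSpace.rclikeToReal ℂ _
  set K := Real.exp (α * (r / 4) ^ 2 / 2)
  have hr4 : 0 < r / 4 := by positivity
  have hint (w : EuclideanSpace ℂ (Fin n)) :=
    (integrable_exp_neg_mul_norm_sub_sq (by positivity : 0 < α / 4) w).const_mul K
  have hbound (w : EuclideanSpace ℂ (Fin n)) (j : ℕ) (x) (hx : x ∈ ball (z j) (r / 4)) :=
    exp_neg_mul_norm_sub_sq_le hα.le (mem_ball.1 hx).le w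
  have hsum (w : EuclideanSpace ℂ (Fin n)) :=
    summable_of_pairwise_disjoint_ball volume hr4 hdisj (hint w) (fun _ => by positivity)
      (fun _ => by positivity) (hbound w)
  set C := K * (∫ x : EuclideanSpace ℂ (Fin n), Real.exp (-(α / 4) * ‖x‖ ^ 2)) /
    volume.real (ball (0 : EuclideanSpace ℂ (Fin n)) (r / 4))
  have hupper (w : EuclideanSpace ℂ (Fin n)) :
      ∑' j, Real.exp (-α * ‖z j - w‖ ^ 2 / 2) ≤ C := by
    have h := tsum_le_integral_div_measureReal_ball volume hr4 hdisj (hint w)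
      (fun _ => by positivity) (fun _ => by positivity) (hbound w)
    rwa [integral_const_mul,
      integral_sub_right_eq_self (fun x => Real.exp (-(α / 4) * ‖x‖ ^ 2))] at h
  have hlower (w : EuclideanSpace ℂ (Fin n)) :
      Real.exp (-α * (r / 2) ^ 2 / 2) ≤ ∑' j, Real.exp (-α * ‖z j - w‖ ^ 2 / 2) := by
    obtain ⟨j, hj⟩ := hcover w
    have hjw : ‖z j - w‖ ≤ r / 2 := by
      rw [← dist_eq_norm, dist_comm]; exact (mem_ball.1 hj).le
    refine le_trans ?_ ((hsum w).le_tsum j fun _ _ => (Real.exp_pos _).le)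
    rw [Real.exp_le_exp, neg_mul, neg_mul, neg_div, neg_div, neg_le_neg_iff]
    gcongr
  exact ⟨_, C, Real.exp_pos _, (hlower 0).trans (hupper 0), fun w => ⟨hlower w, hupper w⟩⟩
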